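/- Let α ≥ 0 and let g : D̄ → ℂ be continuous on the closed unit disc. Then for every z ∈ D, ∫_D |G_α(z,w) g(w)| dA(w) ≤ 2^α ‖g‖_∞, where ‖g‖_∞ = sup_{z∈D}|g(z)|; moreover, for every fixed w ∈ D, ∫_D |G_α(z,w)| dA(z) < ∞. -/

import Mathlib

open Complex MeasureTheory Metric Real Set intervalIntegral

noncomputable section

/-- The open unit disc in the complex plane. -/
def unitDisc : Set ℂ := Metric.ball 0 1

/-- The unit circle in the complex plane. -/
def unitCircle : Set ℂ := Metric.sphere 0 1

/-- The Wirtinger derivative `∂f/∂z = (1/2)(f_x - i f_y)`. -/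
def wderiv (f : ℂ → ℂ) (z : ℂ) : ℂ :=
  (fderiv ℝ f z 1 - Complex.I * fderiv ℝ f z Complex.I) / 2

/-- The conjugate Wirtinger derivative `∂f/∂z̄ = (1/2)(f_x + i f_y)`. -/
def wderivBar (f : ℂ → ℂ) (z : ℂ) : ℂ :=
  (fderiv ℝ f z 1 + Complex.I * fderiv ℝ f z Complex.I) / 2

/-- `‖D_f(z)‖ = |f_z(z)| + |f_z̄(z)|`, the operator norm of the real Jacobian. -/
def jacNorm (f : ℂ → ℂ) (z : ℂ) : ℝ :=
  ‖wderiv f z‖ + ‖wderivBar f z‖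

/-- `f` is α-harmonic on the unit disc: `∂/∂z[(1-|z|²)^{-α} ∂f/∂z̄] = 0` on `𝔻`. -/
def IsAlphaHarmonic (α : ℝ) (f : ℂ → ℂ) : Prop :=
  ∀ z ∈ unitDisc,
    wderiv (fun w => (((1 - ‖w‖ ^ 2) ^ (-α) : ℝ) : ℂ) * wderivBar f w) z = 0

/-- The α-harmonic Poisson kernel `P_α(z) = (1-|z|²)^{α+1}/((1-z)(1-z̄)^{α+1})`. -/
def alphaPoissonKernel (α : ℝ) (z : ℂ) : ℂ :=
  (((1 - ‖z‖ ^ 2) ^ (α + 1) : ℝ) : ℂ) /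
    ((1 - z) * (1 - (starRingEnd ℂ) z) ^ ((α : ℂ) + 1))

/-- The Poisson-type integral `P_α[f*](z) = (1/2π) ∫₀^{2π} P_α(z e^{-iθ}) f*(e^{iθ}) dθ`. -/
def alphaPoissonIntegral (α : ℝ) (fstar : ℂ → ℂ) (z : ℂ) : ℂ :=
  (1 / (2 * Real.pi) : ℝ) • ∫ θ in (0:ℝ)..(2 * Real.pi),
    alphaPoissonKernel α (z * Complex.exp (-(θ : ℂ) * Complex.I)) *
      fstar (Complex.exp ((θ : ℂ) * Complex.I))

/-- The ordinary Poisson kernel `P(z) = (1-|z|²)/|1-z|²`. -/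
def poissonKernelR (z : ℂ) : ℝ := (1 - ‖z‖ ^ 2) / ‖1 - z‖ ^ 2

/-- `h(s) = ∫₀^s t^α/(1-t) dt`. -/
def greenH (α : ℝ) (s : ℝ) : ℝ := ∫ t in (0:ℝ)..s, t ^ α / (1 - t)

/-- `φ(z,w) = (1-|z|²)(1-|w|²)/|1 - z w̄|²`. -/
def greenPhi (z w : ℂ) : ℝ :=
  (1 - ‖z‖ ^ 2) * (1 - ‖w‖ ^ 2) /
    ‖1 - z * (starRingEnd ℂ) w‖ ^ 2

/-- The α-harmonic Green function `G_α(z,w) = -(1 - z w̄)^α h(φ(z,w))`. -/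
def greenFn (α : ℝ) (z w : ℂ) : ℂ :=
  -(1 - z * (starRingEnd ℂ) w) ^ (α : ℂ) * ((greenH α (greenPhi z w) : ℝ) : ℂ)

/-- `G[g](z) = ∫_𝔻 G_α(z,w) g(w) dA(w)` with `dA` the normalized area measure. -/
def greenIntegral (α : ℝ) (g : ℂ → ℂ) (z : ℂ) : ℂ :=
  (1 / Real.pi : ℝ) • ∫ w in unitDisc, greenFn α z w * g w

/-- `‖f*‖_∞ = sup_{ζ ∈ 𝕋} |f*(ζ)|`. -/
def supCircle (fstar : ℂ → ℂ) : ℝ := ⨆ ζ ∈ unitCircle, ‖fstar ζ‖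

/-- `‖g‖_∞ = sup_{z ∈ 𝔻} |g(z)|`. -/
def supDisc (g : ℂ → ℂ) : ℝ := ⨆ z ∈ unitDisc, ‖g z‖

/-- The Laplacian of a real-valued function: `Δu = u_{xx} + u_{yy}`. -/
def lapR (u : ℂ → ℝ) (z : ℂ) : ℝ :=
  fderiv ℝ (fun w => fderiv ℝ u w 1) z 1 +
    fderiv ℝ (fun w => fderiv ℝ u w Complex.I) z Complex.I

/-!
Since `1 - φ(z,w) = |z - w|² / |1 - z w̄|²` and `t ^ α ≤ 1` on `[0, 1]`, we get
`|G_α(z,w)| ≤ |1 - z w̄| ^ α · (-log (1 - φ(z,w))) ≤ 2 ^ α · 2 log |(1 - z̄ w) / (w - z)|`,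
i.e. `2 ^ α` times twice the Green function of the Laplacian on `𝔻`. On the circle `|w| = r` the
mean of `log |1 - z̄ w|` vanishes (it is harmonic in `w`) and the mean of `log |w - z|` is at least
`log r`, so integrating in polar coordinates bounds `∫_𝔻 |G_α(z,w)| dw` by
`2 ^ α ∫₀¹ 4π r (-log r) dr = 2 ^ α π`. The second estimate is the first one with `z` and `w`
swapped, since `|G_α(z,w)| = |G_α(w,z)|`.
-/

open ComplexConjugate
open scoped ENNReal

lemma norm_one_sub_mul_conj_comm (z w : ℂ) : ‖1 - z * conj w‖ = ‖1 - conj z * w‖ := by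
  rw [← Complex.norm_conj]
  simp [mul_comm]

lemma one_sub_mul_ne_zero_of_norm_lt_one {a b : ℂ} (ha : ‖a‖ < 1) (hb : ‖b‖ ≤ 1) :
    1 - a * b ≠ 0 := by
  refine sub_ne_zero.2 fun h => ?_
  have : ‖a * b‖ < 1 := by
    rw [norm_mul]; nlinarith [norm_nonneg a, norm_nonneg b]
  simp [← h] at this

lemma norm_one_sub_mul_conj_sq_sub_norm_sub_sq (z w : ℂ) :
    ‖1 - z * conj w‖ ^ 2 - ‖z - w‖ ^ 2 = (1 - ‖z‖ ^ 2) * (1 - ‖w‖ ^ 2) := by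
  simp only [Complex.sq_norm, Complex.normSq_apply, Complex.sub_re, Complex.sub_im,
    Complex.mul_re, Complex.mul_im, Complex.one_re, Complex.one_im, Complex.conj_re,
    Complex.conj_im]
  ring

lemma greenPhi_comm (z w : ℂ) : greenPhi z w = greenPhi w z := by
  rw [greenPhi, greenPhi, norm_one_sub_mul_conj_comm, mul_comm (1 - ‖z‖ ^ 2)]
  simp [mul_comm]

lemma one_sub_greenPhi {z w : ℂ} (h : 1 - z * conj w ≠ 0) :
    1 - greenPhi z w = ‖z - w‖ ^ 2 / ‖1 - z * conj w‖ ^ 2 := by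
  rw [greenPhi, ← norm_one_sub_mul_conj_sq_sub_norm_sub_sq]
  field_simp
  ring

lemma greenPhi_nonneg {z w : ℂ} (hz : ‖z‖ ≤ 1) (hw : ‖w‖ ≤ 1) : 0 ≤ greenPhi z w := by
  unfold greenPhi
  have : 0 ≤ 1 - ‖z‖ ^ 2 := by nlinarith [norm_nonneg z]
  have : 0 ≤ 1 - ‖w‖ ^ 2 := by nlinarith [norm_nonneg w]
  positivity

lemma greenPhi_lt_one {z w : ℂ} (h : 1 - z * conj w ≠ 0) (hzw : z ≠ w) :
    greenPhi z w < 1 := by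
  have : 0 < ‖z - w‖ ^ 2 / ‖1 - z * conj w‖ ^ 2 := by
    have := sub_ne_zero.2 hzw
    positivity
  linarith [one_sub_greenPhi h]

lemma neg_log_one_sub_greenPhi {z w : ℂ} (h : 1 - z * conj w ≠ 0) (hzw : z ≠ w) :
    -Real.log (1 - greenPhi z w) = 2 * (Real.log ‖1 - conj z * w‖ - Real.log ‖w - z‖) := by
  have hzw' : w - z ≠ 0 := sub_ne_zero.2 hzw.symm
  have hn : ‖1 - conj z * w‖ ≠ 0 := by
    rw [← norm_one_sub_mul_conj_comm]; exact norm_ne_zero_iff.2 h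
  rw [one_sub_greenPhi h, ← norm_neg (z - w), neg_sub, norm_one_sub_mul_conj_comm,
    Real.log_div (by positivity) (by positivity), Real.log_pow, Real.log_pow]
  push_cast
  ring

lemma greenH_nonneg (α : ℝ) {s : ℝ} (h0 : 0 ≤ s) (h1 : s ≤ 1) : 0 ≤ greenH α s :=
  intervalIntegral.integral_nonneg h0 fun t ht =>
    div_nonneg (Real.rpow_nonneg ht.1 α) (by linarith [ht.2])

lemma integral_inv_one_sub {s : ℝ} (hs : s < 1) :
    ∫ t in (0:ℝ)..s, (1 - t)⁻¹ = -Real.log (1 - s) := by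
  rw [intervalIntegral.integral_comp_sub_left (fun x => x⁻¹), sub_zero,
    integral_inv_of_pos (by linarith) one_pos, one_div, Real.log_inv]

lemma greenH_le_neg_log {α s : ℝ} (hα : 0 ≤ α) (h0 : 0 ≤ s) (h1 : s < 1) :
    greenH α s ≤ -Real.log (1 - s) := by
  have hpos : ∀ t ∈ Icc 0 s, 0 < 1 - t := fun t ht => by linarith [ht.2]
  rw [← integral_inv_one_sub h1]
  refine intervalIntegral.integral_mono_on h0 ?_ ?_ fun t ht => ?_
  · refine ContinuousOn.intervalIntegrable_of_Icc h0 fun t ht => ?_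
    exact ((Real.continuousAt_rpow_const t α (Or.inr hα)).div (by fun_prop)
      (hpos t ht).ne').continuousWithinAt
  · exact ContinuousOn.intervalIntegrable_of_Icc h0 fun t ht =>
      ((continuousAt_const.sub continuousAt_id).inv₀ (hpos t ht).ne').continuousWithinAt
  · rw [div_eq_mul_inv]
    exact mul_le_of_le_one_left (inv_nonneg.2 (hpos t ht).le)
      (Real.rpow_le_one ht.1 (by linarith [ht.2]) hα)

lemma norm_greenFn (α : ℝ) (z w : ℂ) :
    ‖greenFn α z w‖ = ‖1 - z * conj w‖ ^ α * |greenH α (greenPhi z w)| := by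
  rw [greenFn, norm_mul, norm_neg, Complex.norm_cpow_real, Complex.norm_real, Real.norm_eq_abs]

lemma norm_greenFn_comm (α : ℝ) (z w : ℂ) : ‖greenFn α z w‖ = ‖greenFn α w z‖ := by
  rw [norm_greenFn, norm_greenFn, greenPhi_comm, norm_one_sub_mul_conj_comm, mul_comm w]

lemma norm_greenFn_le {α : ℝ} (hα : 0 ≤ α) {z w : ℂ} (hz : ‖z‖ < 1) (hw : ‖w‖ < 1)
    (hzw : z ≠ w) : ‖greenFn α z w‖ ≤ 2 ^ α * -Real.log (1 - greenPhi z w) := by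
  have hne : 1 - z * conj w ≠ 0 :=
    one_sub_mul_ne_zero_of_norm_lt_one hz (by simpa using hw.le)
  have h0 := greenPhi_nonneg hz.le hw.le
  have h1 := greenPhi_lt_one hne hzw
  have hnorm : ‖1 - z * conj w‖ ≤ 2 := by
    calc ‖1 - z * conj w‖ ≤ 1 + ‖z‖ * ‖w‖ := by
          simpa using norm_sub_le (1 : ℂ) (z * conj w)
      _ ≤ 2 := by nlinarith [norm_nonneg z, norm_nonneg w]
  rw [norm_greenFn, abs_of_nonneg (greenH_nonneg α h0 h1.le)]
  exact mul_le_mul (Real.rpow_le_rpow (norm_nonneg _) hnorm hα) (greenH_le_neg_log hα h0 h1)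
    (greenH_nonneg α h0 h1.le) (by positivity)

lemma integral_mul_log_from_zero {b : ℝ} (hb : 0 ≤ b) :
    ∫ x in (0:ℝ)..b, x * Real.log x = b ^ 2 * Real.log b / 2 - b ^ 2 / 4 := by
  have hderiv : ∀ x ∈ Ioo 0 b,
      HasDerivAt (fun x => x * (x * Real.log x) / 2 - x ^ 2 / 4) (x * Real.log x) x := by
    intro x hx
    refine ((((hasDerivAt_id' x).mul (Real.hasDerivAt_mul_log hx.1.ne')).div_const 2).sub
      ((hasDerivAt_pow 2 x).div_const 4)).congr_deriv ?_
    ring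
  rw [intervalIntegral.integral_eq_sub_of_hasDerivAt_of_le hb (by fun_prop) hderiv
    (Real.continuous_mul_log.intervalIntegrable _ _)]
  ring

lemma measurableSet_unitDisc : MeasurableSet unitDisc := measurableSet_ball

lemma Complex.polarCoord_symm_eq_circleMap (p : ℝ × ℝ) :
    Complex.polarCoord.symm p = circleMap 0 p.1 p.2 := by
  simp [circleMap_zero, Complex.exp_mul_I]

lemma lintegral_unitDisc_eq_polar (f : ℂ → ℝ≥0∞) (hf : Measurable f) :
    ∫⁻ w in unitDisc, f w =
      ∫⁻ r in Ioo 0 1, ENNReal.ofReal r * ∫⁻ θ in Ioo (-π) π, f (circleMap 0 r θ) := by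
  have hcircle : ∀ r ∈ Ioi (0 : ℝ),
      ∫⁻ θ in Ioo (-π) π, ENNReal.ofReal r • unitDisc.indicator f (circleMap 0 r θ) =
        (Iio 1).indicator
          (fun r => ENNReal.ofReal r * ∫⁻ θ in Ioo (-π) π, f (circleMap 0 r θ)) r := by
    intro r (hr : 0 < r)
    by_cases hr1 : r < 1
    · have hmem : ∀ θ, circleMap 0 r θ ∈ unitDisc := fun θ => by
        simp [unitDisc, norm_circleMap_zero, abs_of_pos hr, hr1]
      simp only [indicator_of_mem (hmem _), indicator_of_mem (show r ∈ Iio 1 from hr1),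
        smul_eq_mul]
      exact lintegral_const_mul _ (hf.comp (measurable_circleMap 0 r))
    · have hmem : ∀ θ, circleMap 0 r θ ∉ unitDisc := fun θ => by
        simp [unitDisc, norm_circleMap_zero, abs_of_pos hr, not_lt.1 hr1]
      simp [indicator_of_notMem (hmem _), indicator_of_notMem (show r ∉ Iio 1 from hr1)]
  have hmeas : Measurable Complex.polarCoord.symm :=
    Complex.measurableEquivRealProd.symm.measurable.comp continuous_polarCoord_symm.measurable
  rw [← lintegral_indicator measurableSet_unitDisc, ← Complex.lintegral_comp_polarCoord_symm,
    polarCoord_target, Measure.volume_eq_prod, ← Measure.prod_restrict,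
    lintegral_prod _ (by exact (measurable_fst.ennreal_ofReal.smul
      ((hf.indicator measurableSet_unitDisc).comp hmeas)).aemeasurable)]
  simp_rw [Complex.polarCoord_symm_eq_circleMap]
  rw [setLIntegral_congr_fun measurableSet_Ioi hcircle, lintegral_indicator measurableSet_Iio,
    Measure.restrict_restrict measurableSet_Iio, Iio_inter_Ioi]

lemma setLIntegral_ofReal_circleMap {F : ℂ → ℝ} {c : ℂ} {r : ℝ} (hF : CircleIntegrable F c r)
    (hF0 : ∀ θ, 0 ≤ F (circleMap c r θ)) :
    ∫⁻ θ in Ioo (-π) π, ENNReal.ofReal (F (circleMap c r θ)) =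
      ENNReal.ofReal (2 * π * circleAverage F c r) := by
  have hper : Function.Periodic (fun θ => F (circleMap c r θ)) (2 * π) :=
    fun θ => by simp [periodic_circleMap c r θ]
  have hint : IntervalIntegrable (fun θ => F (circleMap c r θ)) volume (-π) π :=
    hper.intervalIntegrable₀ (by positivity) hF _ _
  rw [← ofReal_integral_eq_lintegral_ofReal
    (hint.1.mono_set Ioo_subset_Ioc_self) (.of_forall hF0),
    ← integral_Ioc_eq_integral_Ioo, ← intervalIntegral.integral_of_le (by linarith [pi_pos]),
    circleAverage_eq_integral_add (-π),
    intervalIntegral.integral_comp_add_right (fun θ => F (circleMap c r θ)), smul_eq_mul]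
  congr 1
  field_simp
  ring_nf

lemma circleAverage_log_norm_one_sub_conj_mul {z : ℂ} (hz : ‖z‖ < 1) {r : ℝ} (hr : |r| < 1) :
    circleAverage (fun w => Real.log ‖1 - conj z * w‖) 0 r = 0 := by
  rw [InnerProductSpace.HarmonicOnNhd.circleAverage_eq]
  · simp
  intro w hw
  apply AnalyticAt.harmonicAt_log_norm (by fun_prop)
  exact one_sub_mul_ne_zero_of_norm_lt_one (by simpa using hz)
    (by simpa using (mem_closedBall_zero_iff.1 hw).trans hr.le)

lemma circleAverage_log_norm_one_sub_conj_mul_sub_log_norm_sub_le {z : ℂ} (hz : ‖z‖ < 1)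
    {r : ℝ} (hr0 : 0 < r) (hr1 : r < 1) :
    circleAverage (fun w => Real.log ‖1 - conj z * w‖ - Real.log ‖w - z‖) 0 r ≤
      -Real.log r := by
  have h₁ : CircleIntegrable (fun w => Real.log ‖1 - conj z * w‖) 0 r :=
    MeromorphicOn.circleIntegrable_log_norm fun w _ => by fun_prop
  rw [circleAverage_fun_sub h₁ (circleIntegrable_log_norm_sub_const r),
    circleAverage_log_norm_one_sub_conj_mul hz (by rwa [abs_of_pos hr0]),
    circleAverage_log_norm_sub_const_eq_log_radius_add_posLog hr0.ne']
  linarith [posLog_nonneg (x := r⁻¹ * ‖0 - z‖)]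

lemma setLIntegral_circleMap_neg_log_one_sub_greenPhi_le {z : ℂ} (hz : ‖z‖ < 1) {r : ℝ}
    (hr0 : 0 < r) (hr1 : r < 1) (hrz : r ≠ ‖z‖) :
    ∫⁻ θ in Ioo (-π) π, ENNReal.ofReal (-Real.log (1 - greenPhi z (circleMap 0 r θ))) ≤
      ENNReal.ofReal (-(4 * π * Real.log r)) := by
  set G : ℂ → ℝ := fun w => Real.log ‖1 - conj z * w‖ - Real.log ‖w - z‖
  have hnorm : ∀ θ, ‖circleMap 0 r θ‖ = r := fun θ => by
    rw [norm_circleMap_zero, abs_of_pos hr0]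
  have hden : ∀ θ, 1 - z * conj (circleMap 0 r θ) ≠ 0 := fun θ =>
    one_sub_mul_ne_zero_of_norm_lt_one hz (by rw [Complex.norm_conj, hnorm]; exact hr1.le)
  have hne : ∀ θ, z ≠ circleMap 0 r θ := fun θ h => hrz (by rw [← hnorm θ, h])
  have hG : ∀ θ, -Real.log (1 - greenPhi z (circleMap 0 r θ)) = 2 * G (circleMap 0 r θ) :=
    fun θ => neg_log_one_sub_greenPhi (hden θ) (hne θ)
  have hG0 : ∀ θ, 0 ≤ 2 * G (circleMap 0 r θ) := fun θ => by
    have := greenPhi_nonneg hz.le (hnorm θ ▸ hr1.le)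
    have := greenPhi_lt_one (hden θ) (hne θ)
    exact hG θ ▸ neg_nonneg.2 (Real.log_nonpos (by linarith) (by linarith))
  have hGint : CircleIntegrable G 0 r :=
    (MeromorphicOn.circleIntegrable_log_norm fun w _ => by fun_prop).sub
      (circleIntegrable_log_norm_sub_const r)
  simp_rw [hG]
  have h2 : circleAverage (fun w => 2 * G w) 0 r = 2 * circleAverage G 0 r :=
    circleAverage_fun_smul (a := (2 : ℝ)) (f := G)
  rw [setLIntegral_ofReal_circleMap (F := fun w => 2 * G w)
    (hGint.const_smul (a := (2 : ℝ))) hG0, h2]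
  refine ENNReal.ofReal_le_ofReal ?_
  nlinarith [circleAverage_log_norm_one_sub_conj_mul_sub_log_norm_sub_le hz hr0 hr1, pi_pos]

lemma lintegral_neg_log_one_sub_greenPhi_le {z : ℂ} (hz : ‖z‖ < 1) :
    ∫⁻ w in unitDisc, ENNReal.ofReal (-Real.log (1 - greenPhi z w)) ≤ ENNReal.ofReal π := by
  have hmeas : Measurable fun w => ENNReal.ofReal (-Real.log (1 - greenPhi z w)) := by
    unfold greenPhi; fun_prop
  have hcont : Continuous fun r => r * -(4 * π * Real.log r) := by
    convert Real.continuous_mul_log.const_mul (-(4 * π)) using 2 with r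
    ring
  have hrad : IntegrableOn (fun r => r * -(4 * π * Real.log r)) (Ioo 0 1) :=
    hcont.integrableOn_Icc.mono_set Ioo_subset_Icc_self
  have hrad0 : 0 ≤ᵐ[volume.restrict (Ioo 0 1)] fun r => r * -(4 * π * Real.log r) := by
    filter_upwards [ae_restrict_mem measurableSet_Ioo] with r hr
    have := Real.log_nonpos hr.1.le hr.2.le
    have := pi_pos
    exact mul_nonneg hr.1.le (by nlinarith)
  calc _ = ∫⁻ r in Ioo 0 1, ENNReal.ofReal r *
        ∫⁻ θ in Ioo (-π) π, ENNReal.ofReal (-Real.log (1 - greenPhi z (circleMap 0 r θ))) :=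
        lintegral_unitDisc_eq_polar _ hmeas
    _ ≤ ∫⁻ r in Ioo 0 1, ENNReal.ofReal (r * -(4 * π * Real.log r)) := by
        refine lintegral_mono_ae ?_
        filter_upwards [ae_restrict_mem measurableSet_Ioo,
          ae_restrict_of_ae (Measure.ae_ne volume ‖z‖)] with r hr hrz
        rw [ENNReal.ofReal_mul hr.1.le]
        gcongr
        exact setLIntegral_circleMap_neg_log_one_sub_greenPhi_le hz hr.1 hr.2 hrz
    _ = ENNReal.ofReal π := by
        rw [← ofReal_integral_eq_lintegral_ofReal hrad hrad0, ← integral_Ioc_eq_integral_Ioo,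
          ← intervalIntegral.integral_of_le zero_le_one]
        congr 1
        simp only [mul_neg, mul_left_comm _ (4 * π), intervalIntegral.integral_neg,
          intervalIntegral.integral_const_mul, integral_mul_log_from_zero zero_le_one]
        norm_num
        ring

lemma lintegral_norm_greenFn_le {α : ℝ} (hα : 0 ≤ α) {z : ℂ} (hz : z ∈ unitDisc) :
    ∫⁻ w in unitDisc, ENNReal.ofReal ‖greenFn α z w‖ ≤ ENNReal.ofReal (2 ^ α * π) := by
  have hz' : ‖z‖ < 1 := mem_ball_zero_iff.1 hz
  calc _ ≤ ∫⁻ w in unitDisc,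
        ENNReal.ofReal (2 ^ α) * ENNReal.ofReal (-Real.log (1 - greenPhi z w)) := by
        refine lintegral_mono_ae ?_
        filter_upwards [ae_restrict_mem measurableSet_unitDisc,
          ae_restrict_of_ae (Measure.ae_ne volume z)] with w hw hwz
        rw [← ENNReal.ofReal_mul (by positivity)]
        exact ENNReal.ofReal_le_ofReal
          (norm_greenFn_le hα hz' (mem_ball_zero_iff.1 hw) hwz.symm)
    _ = ENNReal.ofReal (2 ^ α) *
          ∫⁻ w in unitDisc, ENNReal.ofReal (-Real.log (1 - greenPhi z w)) :=
        lintegral_const_mul' _ _ ENNReal.ofReal_ne_top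
    _ ≤ ENNReal.ofReal (2 ^ α) * ENNReal.ofReal π := by
        gcongr
        exact lintegral_neg_log_one_sub_greenPhi_le hz'
    _ = ENNReal.ofReal (2 ^ α * π) := (ENNReal.ofReal_mul (by positivity)).symm

lemma lintegral_norm_greenFn_mul_le {α : ℝ} (hα : 0 ≤ α) {z : ℂ} (hz : z ∈ unitDisc)
    {g : ℂ → ℂ} {M : ℝ} (hM : ∀ w ∈ unitDisc, ‖g w‖ ≤ M) :
    ∫⁻ w in unitDisc, ENNReal.ofReal ‖greenFn α z w * g w‖ ≤
      ENNReal.ofReal (M * (2 ^ α * π)) := by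
  have hM0 : 0 ≤ M := (norm_nonneg _).trans (hM z hz)
  calc _ ≤ ∫⁻ w in unitDisc, ENNReal.ofReal M * ENNReal.ofReal ‖greenFn α z w‖ := by
        refine setLIntegral_mono' measurableSet_unitDisc fun w hw => ?_
        rw [← ENNReal.ofReal_mul hM0, norm_mul, mul_comm M]
        exact ENNReal.ofReal_le_ofReal (mul_le_mul_of_nonneg_left (hM w hw) (norm_nonneg _))
    _ = ENNReal.ofReal M * ∫⁻ w in unitDisc, ENNReal.ofReal ‖greenFn α z w‖ :=
        lintegral_const_mul' _ _ ENNReal.ofReal_ne_top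
    _ ≤ ENNReal.ofReal M * ENNReal.ofReal (2 ^ α * π) := by
        gcongr
        exact lintegral_norm_greenFn_le hα hz
    _ = ENNReal.ofReal (M * (2 ^ α * π)) := (ENNReal.ofReal_mul hM0).symm

lemma norm_le_supDisc {g : ℂ → ℂ} {C : ℝ} (hC : ∀ z ∈ unitDisc, ‖g z‖ ≤ C) {w : ℂ}
    (hw : w ∈ unitDisc) : ‖g w‖ ≤ supDisc g := by
  have hbdd : BddAbove (range fun z => ⨆ _ : z ∈ unitDisc, ‖g z‖) := by
    refine ⟨C, ?_⟩
    rintro _ ⟨z, rfl⟩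
    exact Real.iSup_le (hC z) ((norm_nonneg _).trans (hC w hw))
  exact le_ciSup_of_le hbdd w (ciSup_pos (f := fun _ => ‖g w‖) hw).ge

/-- integral estimates for the α-harmonic Green function. -/
theorem greenFn_integral_bounds
    (α : ℝ) (hα : 0 ≤ α)
    (g : ℂ → ℂ) (hg : ContinuousOn g (Metric.closedBall 0 1)) :
    (∀ z ∈ unitDisc,
      ENNReal.ofReal (1 / Real.pi) *
          (∫⁻ w in unitDisc, ENNReal.ofReal ‖greenFn α z w * g w‖) ≤
        ENNReal.ofReal ((2 : ℝ) ^ α * supDisc g)) ∧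
      ∀ w ∈ unitDisc,
        (∫⁻ z in unitDisc, ENNReal.ofReal ‖greenFn α z w‖) < ⊤ := by
  obtain ⟨C, hC⟩ := (isCompact_closedBall (0 : ℂ) 1).exists_bound_of_continuousOn hg
  have hsup : ∀ w ∈ unitDisc, ‖g w‖ ≤ supDisc g := fun w hw =>
    norm_le_supDisc (fun z hz => hC z (ball_subset_closedBall hz)) hw
  refine ⟨fun z hz => ?_, fun w hw => ?_⟩
  · calc _ ≤ ENNReal.ofReal (1 / π) * ENNReal.ofReal (supDisc g * (2 ^ α * π)) := by
          gcongr
          exact lintegral_norm_greenFn_mul_le hα hz hsup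
      _ = ENNReal.ofReal (2 ^ α * supDisc g) := by
          rw [← ENNReal.ofReal_mul (by positivity)]
          congr 1
          field_simp
  · simp_rw [norm_greenFn_comm α _ w]
    exact (lintegral_norm_greenFn_le hα hw).trans_lt ENNReal.ofReal_lt_top
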